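/- Let N ≥ 1, n ≥ 1 and let f: {0,1}^n → {0,1} be almost balanced. Then the biased system P⁰ satisfies the full non-signalling conditions on Bob's side: for every subset S ⊆ {1,…,n}, for all allowed input strings (u,v) and (u,v') with v_j = v'_j for all j ∈ S, for all x ∈ {0,1}^n and all assignments of y_j ∈ {0,1} for j ∈ S: the sum over the remaining coordinates y_j, j ∉ S, of P⁰(x,y|u,v) equals the corresponding sum of P⁰(x,y|u,v'). -/

import Mathlib

open Finset

/-- `sin²(π/(4N))`. -/
noncomputable def s2 (N : ℕ) : ℝ := Real.sin (Real.pi / (4 * N)) ^ 2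

/-- `cos²(π/(4N))`. -/
noncomputable def c2 (N : ℕ) : ℝ := Real.cos (Real.pi / (4 * N)) ^ 2

/-- The set `G_N` of allowed input pairs: `u ∈ U = {0,2,...,2N-2}`,
`v ∈ V = {1,3,...,2N-1}`, and either `|u-v| = 1` or `(u,v) = (0,2N-1)`. -/
def Allowed (N u v : ℕ) : Prop :=
  Even u ∧ u < 2 * N ∧ Odd v ∧ v < 2 * N ∧
    (v = u + 1 ∨ u = v + 1 ∨ (u = 0 ∧ v = 2 * N - 1))

/-- The single quantum box `Q(x,y|u,v)`: on the input pair `(0,2N-1)` it equals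
`sin²(π/(4N))/2` if `x = y` and `cos²(π/(4N))/2` otherwise; on the input pairs
with `|u-v| = 1` it equals `cos²(π/(4N))/2` if `x = y` and `sin²(π/(4N))/2`
otherwise. -/
noncomputable def Qbox (N : ℕ) (x y : Bool) (u v : ℕ) : ℝ :=
  if u = 0 ∧ v = 2 * N - 1 then (if x = y then s2 N / 2 else c2 N / 2)
  else (if x = y then c2 N / 2 else s2 N / 2)

/-- The allowed input pairs `(u,v) ∈ G_N` with `|u-v| = 1`, as a finite set. -/
def adjPairs (N : ℕ) : Finset (ℕ × ℕ) :=
  (Finset.range (2 * N) ×ˢ Finset.range (2 * N)).filter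
    fun p => Even p.1 ∧ Odd p.2 ∧ (p.2 = p.1 + 1 ∨ p.1 = p.2 + 1)

/-- The chained Bell value
`I_N(R) = R(0,0|0,2N-1) + R(1,1|0,2N-1) + Σ_{(u,v)∈G_N, |u-v|=1} (R(0,1|u,v) + R(1,0|u,v))`. -/
noncomputable def IBell (N : ℕ) (R : Bool → Bool → ℕ → ℕ → ℝ) : ℝ :=
  R false false 0 (2 * N - 1) + R true true 0 (2 * N - 1) +
    ∑ p ∈ adjPairs N, (R false true p.1 p.2 + R true false p.1 p.2)

/-- The biased boxes: `Qbias N false = Q⁰` is biased towards `x = 0` and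
`Qbias N true = Q¹` is biased towards `x = 1`, each by shifting probability
`sin²(π/(4N))/2` within every row. -/
noncomputable def Qbias (N : ℕ) (σ : Bool) (x y : Bool) (u v : ℕ) : ℝ :=
  if x = σ then Qbox N x y u v + s2 N / 2 else Qbox N x y u v - s2 N / 2

/-- `π⁰(s)` for the prefix `s = x_1…x_k`: the fraction, among strings
`z ∈ {0,1}^n` having `x_1…x_k` as a prefix, of those with `f(z) = 0`. -/
noncomputable def piz {n : ℕ} (f : (Fin n → Bool) → Bool) (k : ℕ)
    (x : Fin n → Bool) : ℝ :=
  ((Finset.univ.filter fun z : Fin n → Bool =>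
      (∀ j : Fin n, (j : ℕ) < k → z j = x j) ∧ f z = false).card : ℝ) / 2 ^ (n - k)

/-- `Δ_i(x_1…x_{i-1}) = |π⁰(x_1…x_{i-1}0) - π⁰(x_1…x_{i-1}1)|` (the index `i`
is 0-based here, so the prefix consists of the coordinates `j < i`). -/
noncomputable def Del {n : ℕ} (f : (Fin n → Bool) → Bool) (i : Fin n)
    (x : Fin n → Bool) : ℝ :=
  |piz f ((i : ℕ) + 1) (Function.update x i false) -
    piz f ((i : ℕ) + 1) (Function.update x i true)|

/-- `f` is almost balanced: `|Pr_x[f(x)=0] - Pr_x[f(x)=1]| ≤ 1/3` over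
uniformly random `x ∈ {0,1}^n`. -/
def AlmostBalanced {n : ℕ} (f : (Fin n → Bool) → Bool) : Prop :=
  |((Finset.univ.filter fun x : Fin n → Bool => f x = false).card : ℝ) / 2 ^ n -
    ((Finset.univ.filter fun x : Fin n → Bool => f x = true).card : ℝ) / 2 ^ n| ≤ 1 / 3

open Classical in
/-- The pivotal index `i(x)`: the least `i` with `Δ_i(x_1…x_{i-1}) ≥ 2/(3n)`
(junk value if none exists). -/
noncomputable def pivot {n : ℕ} (hn : 0 < n) (f : (Fin n → Bool) → Bool)
    (x : Fin n → Bool) : Fin n :=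
  if h : ∃ i : Fin n, Del f i x ≥ 2 / (3 * n) then
    Fin.find (fun i : Fin n => Del f i x ≥ 2 / (3 * n)) h else ⟨0, hn⟩

/-- The bias direction `σ(x)`: `0` if `π⁰(x_1…x_{i(x)-1}0) > π⁰(x_1…x_{i(x)-1}1)`
and `1` otherwise. -/
noncomputable def sig {n : ℕ} (hn : 0 < n) (f : (Fin n → Bool) → Bool)
    (x : Fin n → Bool) : Bool :=
  if piz f ((pivot hn f x : ℕ) + 1) (Function.update x (pivot hn f x) false) >
      piz f ((pivot hn f x : ℕ) + 1) (Function.update x (pivot hn f x) true)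
  then false else true

/-- An allowed input string: componentwise allowed input pairs `(u_j, v_j) ∈ G_N`. -/
def AllowedStr (N : ℕ) {n : ℕ} (u v : Fin n → ℕ) : Prop :=
  ∀ j : Fin n, Allowed N (u j) (v j)

/-- The `n`-fold product quantum system
`P(x,y|u,v) = ∏_j Q(x_j,y_j|u_j,v_j)`. -/
noncomputable def Pprod (N : ℕ) {n : ℕ} (x y : Fin n → Bool) (u v : Fin n → ℕ) : ℝ :=
  ∏ j : Fin n, Qbox N (x j) (y j) (u j) (v j)

/-- The biased `n`-box systems: `Pbias N hn f false = P⁰` biases the pivotal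
subsystem of `x` in direction `σ(x)`, and `Pbias N hn f true = P¹` biases it
in direction `1 - σ(x)`; all the non-pivotal subsystems are the unbiased `Q`. -/
noncomputable def Pbias (N : ℕ) {n : ℕ} (hn : 0 < n) (f : (Fin n → Bool) → Bool)
    (flip : Bool) (x y : Fin n → Bool) (u v : Fin n → ℕ) : ℝ :=
  Qbias N (xor (sig hn f x) flip) (x (pivot hn f x)) (y (pivot hn f x))
      (u (pivot hn f x)) (v (pivot hn f x)) *
    ∏ j ∈ Finset.univ.erase (pivot hn f x), Qbox N (x j) (y j) (u j) (v j)

/-!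
`P⁰` is a product over the coordinates, with `Q^σ` at the pivot and `Q` elsewhere, so its
marginal over the outputs `y_j`, `j ∉ S`, is the product of the one-box marginals. Bob's
marginal of a single box does not depend on his input: `∑_y Q(x,y|u,v) = 1/2` because
`sin² + cos² = 1`, and the bias adds `±sin²(π/(4N))/2` to both terms whatever `v` is.
-/

theorem sum_filter_eqOn_prod_eq_prod_ite {ι β R : Type*} [Fintype ι] [DecidableEq ι] [Fintype β]
    [CommSemiring R] (S : Finset ι) (y : ι → β)
    -- an argument, not derived, so that the lemma matches `Nat.decidableForallFin` for `ι = Fin n`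
    [DecidablePred fun t : ι → β => ∀ j ∈ S, t j = y j] (g : ι → β → R) :
    ∑ t ∈ univ.filter (fun t : ι → β => ∀ j ∈ S, t j = y j), ∏ j, g j (t j) =
      ∏ j, if j ∈ S then g j (y j) else ∑ b, g j b := by
  have hfilter : univ.filter (fun t : ι → β => ∀ j ∈ S, t j = y j) =
      Fintype.piFinset fun j => if j ∈ S then {y j} else univ := by
    ext t
    simp only [mem_filter, mem_univ, true_and, Fintype.mem_piFinset]
    refine forall_congr' fun j => ?_
    split_ifs with hj <;> simp [hj]
  rw [hfilter, ← prod_univ_sum]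
  refine prod_congr rfl fun j _ => ?_
  split_ifs <;> simp

theorem sum_Qbox (N : ℕ) (a : Bool) (u v : ℕ) : ∑ b, Qbox N a b u v = 1 / 2 := by
  have h := Real.sin_sq_add_cos_sq (Real.pi / (4 * N))
  simp only [Fintype.sum_bool, Qbox, s2, c2]
  split <;> cases a <;> simp <;> linarith

theorem sum_Qbias (N : ℕ) (σ a : Bool) (u v : ℕ) :
    ∑ b, Qbias N σ a b u v = 1 / 2 + if a = σ then s2 N else -s2 N := by
  have h := sum_Qbox N a u v
  simp only [Fintype.sum_bool, Qbias] at h ⊢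
  split_ifs <;> linarith

theorem Pbias_eq_prod (N : ℕ) {n : ℕ} (hn : 0 < n) (f : (Fin n → Bool) → Bool)
    (flip : Bool) (x y : Fin n → Bool) (u v : Fin n → ℕ) :
    Pbias N hn f flip x y u v =
      ∏ j, if j = pivot hn f x then Qbias N (xor (sig hn f x) flip) (x j) (y j) (u j) (v j)
        else Qbox N (x j) (y j) (u j) (v j) := by
  rw [← mul_prod_erase univ _ (mem_univ (pivot hn f x)), if_pos rfl, Pbias]
  exact congrArg _ (prod_congr rfl fun j hj => (if_neg (ne_of_mem_erase hj)).symm)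

theorem biased_system_full_non_signalling_bob_general (N n : ℕ)
    (hn : 0 < n) (f : (Fin n → Bool) → Bool)
    (S : Finset (Fin n)) (u v v' : Fin n → ℕ) (hvv' : ∀ j ∈ S, v j = v' j)
    (x y : Fin n → Bool) :
    ∑ t ∈ Finset.univ.filter (fun t : Fin n → Bool => ∀ j ∈ S, t j = y j),
        Pbias N hn f false x t u v =
      ∑ t ∈ Finset.univ.filter (fun t : Fin n → Bool => ∀ j ∈ S, t j = y j),
        Pbias N hn f false x t u v' := by
  have marginal (w : Fin n → ℕ) := sum_filter_eqOn_prod_eq_prod_ite S y fun j b =>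
    if j = pivot hn f x then Qbias N (sig hn f x) (x j) b (u j) (w j) else Qbox N (x j) b (u j) (w j)
  simp only [Pbias_eq_prod, Bool.xor_false]
  rw [marginal v, marginal v']
  refine prod_congr rfl fun j _ => ?_
  by_cases hjS : j ∈ S
  · simp only [if_pos hjS, hvv' j hjS]
  · rw [if_neg hjS, if_neg hjS]
    by_cases hji : j = pivot hn f x
    · simp only [if_pos hji, sum_Qbias]
    · simp only [if_neg hji, sum_Qbox]

/-- For `N ≥ 1`, `n ≥ 1` and an almost balanced `f`, the biased system `P⁰`
satisfies the full non-signalling conditions on Bob's side: for any subset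
`S` of Bob's coordinates, the joint distribution of Alice's outputs and Bob's
outputs in `S` does not depend on Bob's inputs outside `S`. -/
theorem biased_system_full_non_signalling_bob (N n : ℕ) (hN : 1 ≤ N)
    (hn : 0 < n) (f : (Fin n → Bool) → Bool) (hf : AlmostBalanced f)
    (S : Finset (Fin n)) (u v v' : Fin n → ℕ) (huv : AllowedStr N u v)
    (huv' : AllowedStr N u v') (hvv' : ∀ j ∈ S, v j = v' j)
    (x y : Fin n → Bool) :
    ∑ t ∈ Finset.univ.filter (fun t : Fin n → Bool => ∀ j ∈ S, t j = y j),
        Pbias N hn f false x t u v =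
      ∑ t ∈ Finset.univ.filter (fun t : Fin n → Bool => ∀ j ∈ S, t j = y j),
        Pbias N hn f false x t u v' :=
  biased_system_full_non_signalling_bob_general N n hn f S u v v' hvv' x y
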